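/- Let F be a finite field, let k, d ≥ 1, and let ε ≥ 0. Let w : F^k → F^d be any function. If, for independent uniformly random a, b ∈ F^k, Pr[w(a) + w(b) = w(a+b)] ≥ 1 − ε, then there exists an additive function w* : F^k → F^d (i.e., w*(a+b) = w*(a) + w*(b) for all a, b ∈ F^k) such that the fraction of points b ∈ F^k with w(b) ≠ w*(b) is at most 6ε. -/

import Mathlib

open scoped Classical

/-- The probability that a uniformly random element of a finite type `Ω`
satisfies the predicate `P`. -/
noncomputable def prob {Ω : Type*} [Fintype Ω] (P : Ω → Prop) : ℝ :=
  ((Finset.univ.filter P).card : ℝ) / (Fintype.card Ω : ℝ)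

/-- Relative (Hamming) distance between two functions on a finite domain. -/
noncomputable def rdist {A B : Type*} [Fintype A] (f g : A → B) : ℝ :=
  prob (fun a => f a ≠ g a)

/-!
Majority decoding: let `g x` be the most frequent value of `w (x + b) - w b`. Two instances
of the test, at `(x + b, c)` and `(x + c, b)`, show that two independent samples of
`w (x + b) - w b` agree with probability `≥ 1 - 2δ`, where `δ` is the rejection probability,
so the majority value is taken with probability `≥ 1 - 2δ`. For `δ < 1/6` this exceeds `2/3`,
and a union bound over three events finds a `b` witnessing `g (x + y) = g x + g y`. Finally
every `x` with `w x ≠ g x` makes the test at `(x, b)` fail for a `1 - 2δ` fraction of `b`,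
so `Δ(w, g) (1 - 2δ) ≤ δ`.
-/

open Finset

section Prob

variable {Ω : Type*} [Fintype Ω]

lemma prob_nonneg (P : Ω → Prop) : 0 ≤ prob P := by
  unfold prob
  positivity

lemma prob_le_one (P : Ω → Prop) : prob P ≤ 1 :=
  div_le_one_of_le₀ (by exact_mod_cast card_filter_le _ _) (Nat.cast_nonneg _)

lemma prob_mono {P Q : Ω → Prop} (h : ∀ x, P x → Q x) : prob P ≤ prob Q := by
  unfold prob
  gcongr ?_ / _
  exact_mod_cast card_le_card (monotone_filter_right _ fun x _ => h x)

lemma prob_not [Nonempty Ω] (P : Ω → Prop) : prob (fun x => ¬ P x) = 1 - prob P := by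
  have hN : (Fintype.card Ω : ℝ) ≠ 0 := by positivity
  rw [eq_sub_iff_add_eq, prob, prob, ← add_div, div_eq_one_iff_eq hN, add_comm, ← card_univ]
  norm_cast
  convert card_filter_add_card_filter_not (s := univ) P

lemma prob_add_prob_sub_one_le_prob_and (P Q : Ω → Prop) :
    prob P + prob Q - 1 ≤ prob (fun x => P x ∧ Q x) := by
  have hcard := card_inter_add_card_union (univ.filter P) (univ.filter Q)
  have hunion := card_le_univ (univ.filter P ∪ univ.filter Q)
  have key : #(univ.filter P) + #(univ.filter Q) ≤
      #(univ.filter fun x => P x ∧ Q x) + Fintype.card Ω := by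
    rw [filter_and]
    omega
  unfold prob
  rw [← add_div, sub_le_iff_le_add]
  rcases (Nat.cast_nonneg (Fintype.card Ω) : (0 : ℝ) ≤ _).eq_or_lt with hN | hN
  · simp [← hN]
  · rw [div_add_one hN.ne']
    gcongr ?_ / _
    exact_mod_cast (by convert key)

lemma prob_congr_equiv {Ω' : Type*} [Fintype Ω'] (e : Ω ≃ Ω') (P : Ω' → Prop) :
    prob (fun x => P (e x)) = prob P := by
  unfold prob
  rw [Fintype.card_congr e, card_equiv e (t := univ.filter P) (by simp)]

lemma exists_of_prob_pos {P : Ω → Prop} (h : 0 < prob P) : ∃ x, P x := by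
  by_contra! hP
  simp [prob, hP] at h

end Prob

section Product

variable {A B : Type*} [Fintype A] [Fintype B]

lemma prob_prod_eq_sum_div (P : A × B → Prop) :
    prob P = (∑ a, prob fun b => P (a, b)) / Fintype.card A := by
  simp only [prob, ← sum_div, div_div, Fintype.card_prod, Nat.cast_mul, mul_comm]
  rw [card_filter, Fintype.sum_prod_type]
  push_cast [card_filter]
  rfl

lemma exists_collision_prob_le_prob_eq [Nonempty A] {V : Type*} (h : A → V) :
    ∃ v, prob (fun bc : A × A => h bc.1 = h bc.2) ≤ prob (fun b => h b = v) := by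
  set p : A → ℝ := fun a => prob fun b => h b = h a
  have hsum : ∑ _a : A, (∑ a, p a) / Fintype.card A ≤ ∑ a, p a := by
    rw [sum_const, card_univ, nsmul_eq_mul, mul_div_cancel₀ _ (by positivity)]
  obtain ⟨a, -, ha⟩ := exists_le_of_sum_le univ_nonempty hsum
  refine ⟨h a, ?_⟩
  rw [prob_prod_eq_sum_div]
  simpa only [p, eq_comm] using ha

lemma prob_mul_le_prob_prod {Q : A → Prop} {R : A → B → Prop} {c : ℝ}
    (h : ∀ a, Q a → c ≤ prob (R a)) :
    prob Q * c ≤ prob (fun ab : A × B => Q ab.1 ∧ R ab.1 ab.2) := by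
  rw [prob_prod_eq_sum_div, prob, div_mul_eq_mul_div, ← nsmul_eq_mul, ← sum_const, sum_filter]
  gcongr with a
  split_ifs with hQ
  · exact (h a hQ).trans (prob_mono fun b hR => ⟨hQ, hR⟩)
  · exact prob_nonneg _

end Product

section BLR

variable {G H : Type*} [AddCommGroup G] [Fintype G] [AddCommGroup H]

noncomputable def blrAcceptProb (w : G → H) : ℝ :=
  prob fun ab : G × G => w ab.1 + w ab.2 = w (ab.1 + ab.2)

lemma prob_blr_accept_shift_eq (w : G → H) (x : G) :
    prob (fun bc : G × G => w (x + bc.1) + w bc.2 = w (x + bc.1 + bc.2)) = blrAcceptProb w :=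
  prob_congr_equiv ((Equiv.addLeft x).prodCongr (Equiv.refl G))
    fun ab : G × G => w ab.1 + w ab.2 = w (ab.1 + ab.2)

lemma two_mul_blrAcceptProb_sub_one_le_prob_shift_diff_eq (w : G → H) (x : G) :
    2 * blrAcceptProb w - 1 ≤
      prob fun bc : G × G => w (x + bc.1) - w bc.1 = w (x + bc.2) - w bc.2 := by
  set E : G × G → Prop := fun bc => w (x + bc.1) + w bc.2 = w (x + bc.1 + bc.2)
  have hswap : prob (fun bc => E (Equiv.prodComm G G bc)) = blrAcceptProb w := by
    rw [prob_congr_equiv, prob_blr_accept_shift_eq]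
  calc 2 * blrAcceptProb w - 1
      = prob E + prob (fun bc => E (Equiv.prodComm G G bc)) - 1 := by
        rw [hswap, prob_blr_accept_shift_eq]; ring
    _ ≤ prob fun bc => E bc ∧ E (Equiv.prodComm G G bc) :=
        prob_add_prob_sub_one_le_prob_and _ _
    _ ≤ _ := prob_mono fun ⟨b, c⟩ ⟨h₁, h₂⟩ => by
        simp only [E, Equiv.prodComm_apply, Prod.swap_prod_mk, add_right_comm x c b] at h₁ h₂ ⊢
        rw [sub_eq_sub_iff_add_eq_add, h₁, ← h₂]

lemma exists_le_prob_shift_diff_eq (w : G → H) (x : G) :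
    ∃ v, 2 * blrAcceptProb w - 1 ≤ prob fun b => w (x + b) - w b = v := by
  obtain ⟨v, hv⟩ := exists_collision_prob_le_prob_eq fun b => w (x + b) - w b
  exact ⟨v, (two_mul_blrAcceptProb_sub_one_le_prob_shift_diff_eq w x).trans hv⟩

lemma map_add_of_two_thirds_lt_prob_shift_diff_eq {w g : G → H}
    (hg : ∀ x, 2 / 3 < prob fun b => w (x + b) - w b = g x) (x y : G) :
    g (x + y) = g x + g y := by
  have hy : 2 / 3 < prob fun b => w (y + (x + b)) - w (x + b) = g y :=
    (hg y).trans_eq (prob_congr_equiv (Equiv.addLeft x) _).symm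
  have hpos : 0 < prob fun b => (w (x + b) - w b = g x) ∧
      (w (y + (x + b)) - w (x + b) = g y) ∧ (w (x + y + b) - w b = g (x + y)) := by
    linarith [hg x, hy, hg (x + y), prob_add_prob_sub_one_le_prob_and
      (fun b => w (x + b) - w b = g x) fun b =>
        (w (y + (x + b)) - w (x + b) = g y) ∧ (w (x + y + b) - w b = g (x + y)),
      prob_add_prob_sub_one_le_prob_and (fun b => w (y + (x + b)) - w (x + b) = g y)
        fun b => w (x + y + b) - w b = g (x + y)]
  obtain ⟨b, hbx, hby, hbxy⟩ := exists_of_prob_pos hpos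
  rw [← add_assoc, add_comm y x] at hby
  rw [← hbx, ← hby, ← hbxy]
  abel

lemma rdist_mul_le_one_sub_blrAcceptProb {w g : G → H} {c : ℝ}
    (hg : ∀ x, c ≤ prob fun b => w (x + b) - w b = g x) :
    rdist w g * c ≤ 1 - blrAcceptProb w := by
  rw [blrAcceptProb, ← prob_not]
  refine (prob_mul_le_prob_prod fun x _ => hg x).trans (prob_mono ?_)
  rintro ⟨a, b⟩ ⟨hne, hdiff⟩ hpass
  exact hne (by rw [← hdiff, ← hpass, add_sub_cancel_right])

theorem exists_additive_rdist_mul_le (w : G → H) (hw : 5 / 6 < blrAcceptProb w) :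
    ∃ g : G → H, (∀ a b, g (a + b) = g a + g b) ∧
      rdist w g * (2 * blrAcceptProb w - 1) ≤ 1 - blrAcceptProb w := by
  choose g hg using exists_le_prob_shift_diff_eq w
  refine ⟨g, map_add_of_two_thirds_lt_prob_shift_diff_eq (w := w) fun x => ?_,
    rdist_mul_le_one_sub_blrAcceptProb hg⟩
  linarith [hg x]

end BLR

theorem blr_soundness_general {F : Type*} [Field F] [Fintype F]
    {k d : ℕ} {ε : ℝ}
    (w : (Fin k → F) → (Fin d → F))
    (h : prob (fun x : (Fin k → F) × (Fin k → F) =>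
        w x.1 + w x.2 = w (x.1 + x.2)) ≥ 1 - ε) :
    ∃ wstar : (Fin k → F) → (Fin d → F),
      (∀ a b : Fin k → F, wstar (a + b) = wstar a + wstar b) ∧
      rdist w wstar ≤ 6 * ε := by
  change blrAcceptProb w ≥ 1 - ε at h
  by_cases hε : 1 / 6 ≤ ε
  · exact ⟨0, fun a b => (add_zero 0).symm, (prob_le_one _).trans (by linarith)⟩
  obtain ⟨g, hadd, hdist⟩ := exists_additive_rdist_mul_le w (by linarith)
  have hp : blrAcceptProb w ≤ 1 := prob_le_one _
  refine ⟨g, hadd, ?_⟩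
  by_contra! hfar
  nlinarith [mul_lt_mul_of_pos_right hfar (show 0 < 2 * blrAcceptProb w - 1 by linarith)]

/-- **BLR linearity test soundness** over a finite field `F`: if `w : F^k → F^d`
passes the BLR test with probability at least `1 - ε`, then `w` is `6ε`-close
to an additive function `w* : F^k → F^d`. -/
theorem blr_soundness {F : Type*} [Field F] [Fintype F]
    {k d : ℕ} (hk : 1 ≤ k) (hd : 1 ≤ d) {ε : ℝ} (hε : 0 ≤ ε)
    (w : (Fin k → F) → (Fin d → F))
    (h : prob (fun x : (Fin k → F) × (Fin k → F) =>
        w x.1 + w x.2 = w (x.1 + x.2)) ≥ 1 - ε) :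
    ∃ wstar : (Fin k → F) → (Fin d → F),
      (∀ a b : Fin k → F, wstar (a + b) = wstar a + wstar b) ∧
      rdist w wstar ≤ 6 * ε :=
  blr_soundness_general w h
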